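/- arXiv:0902.2104 — 4 statements merged into one kernel-verified Lean document; each statement's English description precedes it below -/
import Mathlib

section
/- Let θ be a formula such that there exists a TEHS in which θ is satisfiable. Then θ is satisfiable in a pseudo-TEM, i.e., true at some point of some pseudo-TEM. -/
namespace CMATEL

/-- A coalition is a nonempty set of agents. -/
def Coalition (Agt : Type) : Type := {A : Set Agt // A.Nonempty}

/-- The singleton coalition `{a}`. -/
def single {Agt : Type} (a : Agt) : Coalition Agt := ⟨{a}, Set.singleton_nonempty a⟩

/-- Formulas of the language L. -/
inductive Formula (Agt AP : Type) : Type where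
  | atom : AP → Formula Agt AP
  | neg  : Formula Agt AP → Formula Agt AP
  | and  : Formula Agt AP → Formula Agt AP → Formula Agt AP
  | next : Formula Agt AP → Formula Agt AP
  | untl : Formula Agt AP → Formula Agt AP → Formula Agt AP
  | dk   : Coalition Agt → Formula Agt AP → Formula Agt AP
  | ck   : Coalition Agt → Formula Agt AP → Formula Agt AP

variable {Agt AP : Type}

def Formula.imp (φ ψ : Formula Agt AP) : Formula Agt AP :=
  Formula.neg (Formula.and φ (Formula.neg ψ))
def Formula.or (φ ψ : Formula Agt AP) : Formula Agt AP :=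
  Formula.neg (Formula.and (Formula.neg φ) (Formula.neg ψ))
def Formula.iff (φ ψ : Formula Agt AP) : Formula Agt AP :=
  Formula.and (φ.imp ψ) (ψ.imp φ)

/-- The set of subformulas of a formula. -/
def Formula.subf : Formula Agt AP → Set (Formula Agt AP)
  | .atom p   => {Formula.atom p}
  | .neg φ    => insert (Formula.neg φ) φ.subf
  | .and φ ψ  => insert (Formula.and φ ψ) (φ.subf ∪ ψ.subf)
  | .next φ   => insert (Formula.next φ) φ.subf
  | .untl φ ψ => insert (Formula.untl φ ψ) (φ.subf ∪ ψ.subf)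
  | .dk A φ   => insert (Formula.dk A φ) φ.subf
  | .ck A φ   => insert (Formula.ck A φ) φ.subf

/-- A temporal-epistemic system (TES): a nonempty set of states, a nonempty set
of runs, and, for every coalition `A`, relations `R^D_A` and `R^C_A` on points,
where `R^C_A` is the reflexive transitive closure of the union of `R^D_{A'}`
over coalitions `A' ⊆ A`. -/
structure TES (Agt : Type) where
  State : Type
  stateNE : Nonempty State
  runs : Set (ℕ → State)
  runsNE : runs.Nonempty
  RD : Coalition Agt → ↥runs × ℕ → ↥runs × ℕ → Prop
  RC : Coalition Agt → ↥runs × ℕ → ↥runs × ℕ → Prop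
  hRC : ∀ A : Coalition Agt, RC A =
    Relation.ReflTransGen (fun x y => ∃ A' : Coalition Agt, A'.1 ⊆ A.1 ∧ RD A' x y)

abbrev TES.Point (G : TES Agt) : Type := ↥G.runs × ℕ

/-- Synchrony: epistemically related points have the same time component. -/
def TES.Synchronous (G : TES Agt) : Prop :=
  ∀ (A : Coalition Agt) (x y : G.Point), G.RD A x y → x.2 = y.2

/-- A TEF: each `R^D_A` is an equivalence, and `R^D_A = ⋂_{a ∈ A} R^D_{{a}}`. -/
def IsTEF (G : TES Agt) : Prop :=
  (∀ A : Coalition Agt, Equivalence (G.RD A)) ∧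
  (∀ (A : Coalition Agt) (x y : G.Point), G.RD A x y ↔ ∀ a ∈ A.1, G.RD (single a) x y)

/-- A pseudo-TEF: each `R^D_A` is an equivalence, and `R^D_A ⊆ R^D_B` for `B ⊆ A`. -/
def IsPseudoTEF (G : TES Agt) : Prop :=
  (∀ A : Coalition Agt, Equivalence (G.RD A)) ∧
  (∀ (A B : Coalition Agt), B.1 ⊆ A.1 → ∀ x y : G.Point, G.RD A x y → G.RD B x y)

/-- Satisfaction at points `R × ℕ`, given the epistemic relations and a labeling. -/
def Sat {R : Type} (RD RC : Coalition Agt → R × ℕ → R × ℕ → Prop)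
    (lab : R × ℕ → Set AP) : R × ℕ → Formula Agt AP → Prop
  | x, .atom p => p ∈ lab x
  | x, .neg φ => ¬ Sat RD RC lab x φ
  | x, .and φ ψ => Sat RD RC lab x φ ∧ Sat RD RC lab x ψ
  | x, .next φ => Sat RD RC lab (x.1, x.2 + 1) φ
  | x, .untl φ ψ => ∃ i, x.2 ≤ i ∧ Sat RD RC lab (x.1, i) ψ ∧
      ∀ j, x.2 ≤ j → j < i → Sat RD RC lab (x.1, j) φ
  | x, .dk A φ => ∀ y, RD A x y → Sat RD RC lab y φ
  | x, .ck A φ => ∀ y, RC A x y → Sat RD RC lab y φ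

/-- A temporal-epistemic model: a TEF together with a labeling of points. -/
structure TEM (Agt AP : Type) where
  G : TES Agt
  lab : G.Point → Set AP
  isTEF : IsTEF G

def TEM.sat (M : TEM Agt AP) : M.G.Point → Formula Agt AP → Prop :=
  Sat M.G.RD M.G.RC M.lab

/-- A pseudo temporal-epistemic model: a pseudo-TEF together with a labeling. -/
structure PseudoTEM (Agt AP : Type) where
  G : TES Agt
  lab : G.Point → Set AP
  isPTEF : IsPseudoTEF G

def PseudoTEM.sat (M : PseudoTEM Agt AP) : M.G.Point → Formula Agt AP → Prop :=
  Sat M.G.RD M.G.RC M.lab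

/-- `A`-reachability: the reflexive transitive closure of single-agent steps
`R^D_{{a}}`, `a ∈ A`. -/
def AReach (G : TES Agt) (A : Coalition Agt) : G.Point → G.Point → Prop :=
  Relation.ReflTransGen (fun x y => ∃ a ∈ A.1, G.RD (single a) x y)

/-- Fully expanded sets of formulas. -/
def FullyExpanded (Δ : Set (Formula Agt AP)) : Prop :=
  (∀ φ : Formula Agt AP, Formula.neg (Formula.neg φ) ∈ Δ → φ ∈ Δ) ∧
  (∀ φ ψ : Formula Agt AP, Formula.and φ ψ ∈ Δ → φ ∈ Δ ∧ ψ ∈ Δ) ∧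
  (∀ φ ψ : Formula Agt AP, Formula.neg (Formula.and φ ψ) ∈ Δ →
      Formula.neg φ ∈ Δ ∨ Formula.neg ψ ∈ Δ) ∧
  (∀ φ : Formula Agt AP, Formula.neg (Formula.next φ) ∈ Δ →
      Formula.next (Formula.neg φ) ∈ Δ) ∧
  (∀ φ ψ : Formula Agt AP, Formula.untl φ ψ ∈ Δ →
      ψ ∈ Δ ∨ (φ ∈ Δ ∧ Formula.next (Formula.untl φ ψ) ∈ Δ)) ∧
  (∀ φ ψ : Formula Agt AP, Formula.neg (Formula.untl φ ψ) ∈ Δ →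
      (Formula.neg ψ ∈ Δ ∧ Formula.neg φ ∈ Δ) ∨
      (Formula.neg ψ ∈ Δ ∧ Formula.neg (Formula.next (Formula.untl φ ψ)) ∈ Δ)) ∧
  (∀ (A A' : Coalition Agt) (φ : Formula Agt AP), Formula.dk A φ ∈ Δ →
      A.1 ⊆ A'.1 → Formula.dk A' φ ∈ Δ) ∧
  (∀ (A : Coalition Agt) (φ : Formula Agt AP), Formula.dk A φ ∈ Δ → φ ∈ Δ) ∧
  (∀ (A : Coalition Agt) (φ : Formula Agt AP), Formula.ck A φ ∈ Δ →
      ∀ a ∈ A.1, Formula.dk (single a) (Formula.and φ (Formula.ck A φ)) ∈ Δ) ∧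
  (∀ (A : Coalition Agt) (φ : Formula Agt AP), Formula.neg (Formula.ck A φ) ∈ Δ →
      ∃ a ∈ A.1, Formula.neg (Formula.dk (single a) (Formula.and φ (Formula.ck A φ))) ∈ Δ) ∧
  (∀ ψ ∈ Δ, ∀ (A : Coalition Agt) (φ : Formula Agt AP),
      Formula.dk A φ ∈ ψ.subf → Formula.dk A φ ∈ Δ ∨ Formula.neg (Formula.dk A φ) ∈ Δ)

/-- Hintikka-structure conditions (H1)–(H7) for a labeling `H` on a TES. -/
def IsHintikka (G : TES Agt) (H : G.Point → Set (Formula Agt AP)) : Prop :=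
  (∀ (x : G.Point) (φ : Formula Agt AP), Formula.neg φ ∈ H x → φ ∉ H x) ∧
  (∀ x : G.Point, FullyExpanded (H x)) ∧
  (∀ (r : ↥G.runs) (n : ℕ) (φ : Formula Agt AP),
      Formula.next φ ∈ H (r, n) → φ ∈ H (r, n + 1)) ∧
  (∀ (r : ↥G.runs) (n : ℕ) (φ ψ : Formula Agt AP), Formula.untl φ ψ ∈ H (r, n) →
      ∃ i, n ≤ i ∧ ψ ∈ H (r, i) ∧ ∀ j, n ≤ j → j < i → φ ∈ H (r, j)) ∧
  (∀ (x : G.Point) (A : Coalition Agt) (φ : Formula Agt AP),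
      Formula.neg (Formula.dk A φ) ∈ H x →
      ∃ y : G.Point, G.RD A x y ∧ Formula.neg φ ∈ H y) ∧
  (∀ (x y : G.Point) (A : Coalition Agt), G.RD A x y →
      ∀ (A' : Coalition Agt), A'.1 ⊆ A.1 → ∀ φ : Formula Agt AP,
        (Formula.dk A' φ ∈ H x ↔ Formula.dk A' φ ∈ H y)) ∧
  (∀ (x : G.Point) (A : Coalition Agt) (φ : Formula Agt AP),
      Formula.neg (Formula.ck A φ) ∈ H x →
      ∃ y : G.Point, G.RC A x y ∧ Formula.neg φ ∈ H y)

/-- A temporal-epistemic Hintikka structure. -/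
structure TEHS (Agt AP : Type) where
  G : TES Agt
  H : G.Point → Set (Formula Agt AP)
  isH : IsHintikka G H

def TEHS.Synchronous (Hs : TEHS Agt AP) : Prop := Hs.G.Synchronous

/-- Derived relation `R'^D_A`: the reflexive, symmetric and transitive closure of
the union of `R^D_B` over coalitions `B ⊇ A`. -/
def derivedRD (G : TES Agt) (A : Coalition Agt) : G.Point → G.Point → Prop :=
  Relation.EqvGen (fun x y => ∃ B : Coalition Agt, A.1 ⊆ B.1 ∧ G.RD B x y)

/-- Derived relation `R'^C_A`: the transitive closure of the union of
`R'^D_{{a}}` over `a ∈ A`. -/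
def derivedRC (G : TES Agt) (A : Coalition Agt) : G.Point → G.Point → Prop :=
  Relation.TransGen (fun x y => ∃ a ∈ A.1, derivedRD G (single a) x y)

/-- Derived labeling `L(r,n) = H(r,n) ∩ AP`. -/
def derivedLab (Hs : TEHS Agt AP) : Hs.G.Point → Set AP :=
  fun x => {p | Formula.atom p ∈ Hs.H x}

/-- Patently inconsistent set: contains a formula together with its negation. -/
def PatentlyInconsistent (Δ : Set (Formula Agt AP)) : Prop :=
  ∃ φ : Formula Agt AP, φ ∈ Δ ∧ Formula.neg φ ∈ Δ

/-- Minimal fully expanded extension. -/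
def MinimalFEE (Γ Δ : Set (Formula Agt AP)) : Prop :=
  FullyExpanded Δ ∧ Γ ⊆ Δ ∧
  ¬ ∃ Δ' : Set (Formula Agt AP), FullyExpanded Δ' ∧ Γ ⊆ Δ' ∧ Δ' ⊂ Δ

/-- A maximal path from `x` to `y`: consecutive points are related by `R^D_{A_i}`
and by no `R^D_B` for a strictly larger coalition `B`. -/
def IsMaximalPath (G : TES Agt) (m : ℕ) (pts : ℕ → G.Point) (cs : ℕ → Coalition Agt)
    (x y : G.Point) : Prop :=
  pts 0 = x ∧ pts m = y ∧ ∀ i < m,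
    G.RD (cs i) (pts i) (pts (i + 1)) ∧
    ∀ B : Coalition Agt, (cs i).1 ⊂ B.1 → ¬ G.RD B (pts i) (pts (i + 1))

/-- A maximal path equals its reduction iff no two consecutive points lie on the
same run and no two consecutive coalition labels coincide. -/
def IsReducedPath (G : TES Agt) (m : ℕ) (pts : ℕ → G.Point) (cs : ℕ → Coalition Agt) : Prop :=
  (∀ i < m, (pts i).1 ≠ (pts (i + 1)).1) ∧ (∀ i, i + 1 < m → cs i ≠ cs (i + 1))

/-- Forest-likeness: between any two points there is at most one reduced maximal path. -/
def ForestLike (G : TES Agt) : Prop :=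
  ∀ (x y : G.Point) (m₁ : ℕ) (pts₁ : ℕ → G.Point) (cs₁ : ℕ → Coalition Agt)
    (m₂ : ℕ) (pts₂ : ℕ → G.Point) (cs₂ : ℕ → Coalition Agt),
    IsMaximalPath G m₁ pts₁ cs₁ x y → IsReducedPath G m₁ pts₁ cs₁ →
    IsMaximalPath G m₂ pts₂ cs₂ x y → IsReducedPath G m₂ pts₂ cs₂ →
    m₁ = m₂ ∧ (∀ i ≤ m₁, pts₁ i = pts₂ i) ∧ (∀ i < m₁, cs₁ i = cs₂ i)

/-- Finite conjunction of a nonempty list of formulas. -/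
def bigAnd : Formula Agt AP → List (Formula Agt AP) → Formula Agt AP
  | φ, [] => φ
  | φ, ψ :: l => Formula.and φ (bigAnd ψ l)

/-- `D_{{a}}(φ ∧ C_A φ)`. -/
def dform (A : Coalition Agt) (φ : Formula Agt AP) (a : Agt) : Formula Agt AP :=
  Formula.dk (single a) (Formula.and φ (Formula.ck A φ))

/-!
The labels of a Hintikka structure become true in the model on the same runs whose
relation `R'^D_A` is the equivalence closure of `⋃_{B ⊇ A} R^D_B` and whose atoms are read
off the labels. Closing over supersets makes `R'^D_A` antitone in `A`, so the model is a
pseudo-TEM; it contains `R^D_A`, so the witnesses of (H5) and (H7) survive; and by (H6) the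
formulas `D_A φ` are constant along `R'^D_A`, which is what the truth lemma needs for `D_A`
and, through `C_A φ → D_{{a}}(φ ∧ C_A φ)`, for `C_A`.
-/

namespace FullyExpanded

variable {Δ : Set (Formula Agt AP)} (hΔ : FullyExpanded Δ)
include hΔ

theorem mem_of_neg_neg_mem {φ : Formula Agt AP} (h : φ.neg.neg ∈ Δ) : φ ∈ Δ :=
  hΔ.1 φ h

theorem mem_of_and_mem {φ ψ : Formula Agt AP} (h : φ.and ψ ∈ Δ) : φ ∈ Δ ∧ ψ ∈ Δ :=
  hΔ.2.1 φ ψ h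

theorem neg_mem_or_neg_mem_of_neg_and_mem {φ ψ : Formula Agt AP} (h : (φ.and ψ).neg ∈ Δ) :
    φ.neg ∈ Δ ∨ ψ.neg ∈ Δ :=
  hΔ.2.2.1 φ ψ h

theorem next_neg_mem_of_neg_next_mem {φ : Formula Agt AP} (h : φ.next.neg ∈ Δ) :
    φ.neg.next ∈ Δ :=
  hΔ.2.2.2.1 φ h

theorem neg_mem_and_of_neg_untl_mem {φ ψ : Formula Agt AP} (h : (φ.untl ψ).neg ∈ Δ) :
    ψ.neg ∈ Δ ∧ (φ.neg ∈ Δ ∨ (φ.untl ψ).next.neg ∈ Δ) := by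
  rcases hΔ.2.2.2.2.2.1 φ ψ h with ⟨hψ, hφ⟩ | ⟨hψ, hX⟩
  exacts [⟨hψ, .inl hφ⟩, ⟨hψ, .inr hX⟩]

theorem mem_of_dk_mem {A : Coalition Agt} {φ : Formula Agt AP} (h : φ.dk A ∈ Δ) : φ ∈ Δ :=
  hΔ.2.2.2.2.2.2.2.1 A φ h

theorem dform_mem_of_ck_mem {A : Coalition Agt} {φ : Formula Agt AP} (h : φ.ck A ∈ Δ)
    {a : Agt} (ha : a ∈ A.1) : dform A φ a ∈ Δ :=
  hΔ.2.2.2.2.2.2.2.2.1 A φ h a ha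

theorem mem_of_ck_mem {A : Coalition Agt} {φ : Formula Agt AP} (h : φ.ck A ∈ Δ) : φ ∈ Δ :=
  have ⟨_, ha⟩ := A.2
  (hΔ.mem_of_and_mem (hΔ.mem_of_dk_mem (hΔ.dform_mem_of_ck_mem h ha))).1

end FullyExpanded

section Derived

variable {G : TES Agt}

theorem derivedRD_of_RD {A : Coalition Agt} {x y : G.Point} (h : G.RD A x y) :
    derivedRD G A x y :=
  .rel _ _ ⟨A, subset_rfl, h⟩

theorem derivedRD_anti {A B : Coalition Agt} (hBA : B.1 ⊆ A.1) {x y : G.Point}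
    (h : derivedRD G A x y) : derivedRD G B x y :=
  h.mono fun _ _ ⟨C, hAC, hC⟩ => ⟨C, hBA.trans hAC, hC⟩

variable (G) in
def derivedTES : TES Agt where
  State := G.State
  stateNE := G.stateNE
  runs := G.runs
  runsNE := G.runsNE
  RD := derivedRD G
  RC A := Relation.ReflTransGen fun x y =>
    ∃ A' : Coalition Agt, A'.1 ⊆ A.1 ∧ derivedRD G A' x y
  hRC _ := rfl

variable (G) in
theorem isPseudoTEF_derivedTES : IsPseudoTEF (derivedTES G) :=
  ⟨fun _ => Relation.EqvGen.is_equivalence _, fun _ _ hBA _ _ => derivedRD_anti hBA⟩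

theorem derivedTES_RC_of_RC {A : Coalition Agt} {x y : G.Point} (h : G.RC A x y) :
    (derivedTES G).RC A x y := by
  rw [G.hRC] at h
  exact Relation.ReflTransGen.mono
    (fun _ _ ⟨A', hA', hR⟩ => ⟨A', hA', derivedRD_of_RD hR⟩) _ _ h

end Derived

namespace IsHintikka

variable {G : TES Agt} {H : G.Point → Set (Formula Agt AP)} (hH : IsHintikka G H)
include hH

theorem not_mem_of_neg_mem {x : G.Point} {φ : Formula Agt AP} (h : φ.neg ∈ H x) : φ ∉ H x :=
  hH.1 x φ h

theorem fullyExpanded (x : G.Point) : FullyExpanded (H x) :=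
  hH.2.1 x

theorem mem_succ_of_next_mem {r : ↥G.runs} {n : ℕ} {φ : Formula Agt AP}
    (h : φ.next ∈ H (r, n)) : φ ∈ H (r, n + 1) :=
  hH.2.2.1 r n φ h

theorem exists_of_untl_mem {r : ↥G.runs} {n : ℕ} {φ ψ : Formula Agt AP}
    (h : φ.untl ψ ∈ H (r, n)) :
    ∃ i, n ≤ i ∧ ψ ∈ H (r, i) ∧ ∀ j, n ≤ j → j < i → φ ∈ H (r, j) :=
  hH.2.2.2.1 r n φ ψ h

theorem exists_RD_of_neg_dk_mem {x : G.Point} {A : Coalition Agt} {φ : Formula Agt AP}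
    (h : (φ.dk A).neg ∈ H x) : ∃ y, G.RD A x y ∧ φ.neg ∈ H y :=
  hH.2.2.2.2.1 x A φ h

theorem dk_mem_iff_of_RD {x y : G.Point} {B A : Coalition Agt} (hxy : G.RD B x y)
    (hAB : A.1 ⊆ B.1) (φ : Formula Agt AP) : φ.dk A ∈ H x ↔ φ.dk A ∈ H y :=
  hH.2.2.2.2.2.1 x y B hxy A hAB φ

theorem exists_RC_of_neg_ck_mem {x : G.Point} {A : Coalition Agt} {φ : Formula Agt AP}
    (h : (φ.ck A).neg ∈ H x) : ∃ y, G.RC A x y ∧ φ.neg ∈ H y :=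
  hH.2.2.2.2.2.2 x A φ h

theorem neg_untl_mem_of_forall_mem {r : ↥G.runs} {m i : ℕ} {φ ψ : Formula Agt AP}
    (hm : (φ.untl ψ).neg ∈ H (r, m)) (hmi : m ≤ i)
    (hφ : ∀ j, m ≤ j → j < i → φ.neg ∉ H (r, j)) :
    (φ.untl ψ).neg ∈ H (r, i) := by
  induction i, hmi using Nat.le_induction with
  | base => exact hm
  | succ i hmi ih =>
    have hi := ih fun j hmj hji => hφ j hmj (by omega)
    rcases ((hH.fullyExpanded _).neg_mem_and_of_neg_untl_mem hi).2 with hφi | hX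
    · exact absurd hφi (hφ i hmi (by omega))
    · exact hH.mem_succ_of_next_mem ((hH.fullyExpanded _).next_neg_mem_of_neg_next_mem hX)

theorem dk_mem_iff_of_derivedRD {A : Coalition Agt} {x y : G.Point} (h : derivedRD G A x y)
    (φ : Formula Agt AP) : φ.dk A ∈ H x ↔ φ.dk A ∈ H y := by
  induction h with
  | rel u v huv =>
    obtain ⟨B, hAB, hB⟩ := huv
    exact hH.dk_mem_iff_of_RD hB hAB φ
  | refl => rfl
  | symm _ _ _ ih => exact ih.symm
  | trans _ _ _ _ _ ih₁ ih₂ => exact ih₁.trans ih₂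

theorem ck_mem_of_derivedTES_RC {A : Coalition Agt} {φ : Formula Agt AP} {x y : G.Point}
    (hx : φ.ck A ∈ H x) (h : (derivedTES G).RC A x y) : φ.ck A ∈ H y := by
  induction h with
  | refl => exact hx
  | tail _ step ih =>
    obtain ⟨A', hA'A, hstep⟩ := step
    obtain ⟨a, ha⟩ := A'.2
    have hstep_a : derivedRD G (single a) _ _ :=
      derivedRD_anti (Set.singleton_subset_iff.2 ha) hstep
    have hD := (hH.dk_mem_iff_of_derivedRD hstep_a _).1
      ((hH.fullyExpanded _).dform_mem_of_ck_mem ih (hA'A ha))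
    exact ((hH.fullyExpanded _).mem_of_and_mem ((hH.fullyExpanded _).mem_of_dk_mem hD)).2

end IsHintikka

namespace TEHS

def derivedModel (Hs : TEHS Agt AP) : PseudoTEM Agt AP :=
  ⟨derivedTES Hs.G, derivedLab Hs, isPseudoTEF_derivedTES Hs.G⟩

theorem derivedModel_truth (Hs : TEHS Agt AP) (φ : Formula Agt AP) (x : Hs.G.Point) :
    (φ ∈ Hs.H x → Hs.derivedModel.sat x φ) ∧
      (φ.neg ∈ Hs.H x → ¬ Hs.derivedModel.sat x φ) := by
  have hH := Hs.isH
  induction φ generalizing x with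
  | atom p => exact ⟨id, fun hn hs => hH.not_mem_of_neg_mem hn hs⟩
  | neg φ ih =>
    exact ⟨(ih x).2, fun hn hs => hs ((ih x).1 ((hH.fullyExpanded x).mem_of_neg_neg_mem hn))⟩
  | and φ ψ ihφ ihψ =>
    refine ⟨fun h => ?_, fun hn hs => ?_⟩
    · have ⟨hφ, hψ⟩ := (hH.fullyExpanded x).mem_of_and_mem h
      exact ⟨(ihφ x).1 hφ, (ihψ x).1 hψ⟩
    · rcases (hH.fullyExpanded x).neg_mem_or_neg_mem_of_neg_and_mem hn with h | h
      exacts [(ihφ x).2 h hs.1, (ihψ x).2 h hs.2]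
  | next φ ih =>
    obtain ⟨r, n⟩ := x
    refine ⟨fun h => (ih _).1 (hH.mem_succ_of_next_mem h), fun hn => ?_⟩
    exact (ih _).2 (hH.mem_succ_of_next_mem ((hH.fullyExpanded _).next_neg_mem_of_neg_next_mem hn))
  | untl φ ψ ihφ ihψ =>
    obtain ⟨r, n⟩ := x
    refine ⟨fun h => ?_, fun hn ⟨i, hni, hψ, hφ⟩ => ?_⟩
    · obtain ⟨i, hni, hψ, hφ⟩ := hH.exists_of_untl_mem h
      exact ⟨i, hni, (ihψ _).1 hψ, fun j hnj hji => (ihφ _).1 (hφ j hnj hji)⟩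
    · have hi := hH.neg_untl_mem_of_forall_mem hn hni
        fun j hnj hji hnφ => (ihφ _).2 hnφ (hφ j hnj hji)
      exact (ihψ _).2 ((hH.fullyExpanded _).neg_mem_and_of_neg_untl_mem hi).1 hψ
  | dk A φ ih =>
    refine ⟨fun h y hxy => ?_, fun hn hs => ?_⟩
    · exact (ih y).1 ((hH.fullyExpanded y).mem_of_dk_mem ((hH.dk_mem_iff_of_derivedRD hxy φ).1 h))
    · obtain ⟨y, hxy, hnφ⟩ := hH.exists_RD_of_neg_dk_mem hn
      exact (ih y).2 hnφ (hs y (derivedRD_of_RD hxy))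
  | ck A φ ih =>
    refine ⟨fun h y hxy => ?_, fun hn hs => ?_⟩
    · exact (ih y).1 ((hH.fullyExpanded y).mem_of_ck_mem (hH.ck_mem_of_derivedTES_RC h hxy))
    · obtain ⟨y, hxy, hnφ⟩ := hH.exists_RC_of_neg_ck_mem hn
      exact (ih y).2 hnφ (hs y (derivedTES_RC_of_RC hxy))

end TEHS

theorem statement_4_general {Agt AP : Type}
    (θ : Formula Agt AP)
    (h : ∃ (Hs : TEHS Agt AP) (x : Hs.G.Point), θ ∈ Hs.H x) :
    ∃ (M : PseudoTEM Agt AP) (x : M.G.Point), M.sat x θ := by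
  obtain ⟨Hs, x, hx⟩ := h
  exact ⟨Hs.derivedModel, x, (Hs.derivedModel_truth θ x).1 hx⟩

/-- If `θ` is satisfiable in some TEHS, then `θ` is satisfiable in a
pseudo-TEM. -/
theorem statement_4 {Agt AP : Type} [Fintype Agt] [Nonempty Agt]
    (θ : Formula Agt AP)
    (h : ∃ (Hs : TEHS Agt AP) (x : Hs.G.Point), θ ∈ Hs.H x) :
    ∃ (M : PseudoTEM Agt AP) (x : M.G.Point), M.sat x θ :=
  statement_4_general θ h

end CMATEL
end

section
/- Let H be the labeling of a TEHS, let A be a coalition and suppose D_A φ ∈ H(r,n). Suppose there is a finite sequence of points (r,n) = (r_0,n_0), ..., (r_m,n_m) = (r',n') such that for every i < m there is a coalition B_i with A ⊆ B_i such that either ((r_i,n_i),(r_{i+1},n_{i+1})) ∈ R^D_{B_i} or ((r_{i+1},n_{i+1}),(r_i,n_i)) ∈ R^D_{B_i}. Then D_A φ ∈ H(r',n') and φ ∈ H(r',n'). -/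
namespace CMATEL

variable {Agt AP : Type}

theorem _root_.Relation.EqvGen.of_path {α : Type*} {r : α → α → Prop} {f : ℕ → α} {m : ℕ}
    (hf : ∀ i < m, r (f i) (f (i + 1)) ∨ r (f (i + 1)) (f i)) :
    Relation.EqvGen r (f 0) (f m) := by
  induction m with
  | zero => exact .refl _
  | succ k ih =>
    refine .trans _ _ _ (ih fun i hi => hf i (by omega)) ?_
    rcases hf k k.lt_succ_self with hstep | hstep
    · exact .rel _ _ hstep
    · exact .symm _ _ (.rel _ _ hstep)

theorem FullyExpanded.mem_of_dk_mem_s9 {Δ : Set (Formula Agt AP)} (hΔ : FullyExpanded Δ)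
    {A : Coalition Agt} {φ : Formula Agt AP} (h : Formula.dk A φ ∈ Δ) : φ ∈ Δ :=
  hΔ.2.2.2.2.2.2.2.1 A φ h

/-- By (H6), every step `R^D_B` with `A ⊆ B` transports `D_A φ` in both directions. -/
theorem IsHintikka.dk_mem_iff_of_derivedRD_s9 {G : TES Agt} {H : G.Point → Set (Formula Agt AP)}
    (hH : IsHintikka G H) {A : Coalition Agt} {φ : Formula Agt AP} {x y : G.Point}
    (hxy : derivedRD G A x y) : Formula.dk A φ ∈ H x ↔ Formula.dk A φ ∈ H y := by
  induction hxy with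
  | rel x y hstep =>
    obtain ⟨B, hAB, hB⟩ := hstep
    exact hH.2.2.2.2.2.1 x y B hB A hAB φ
  | refl => rfl
  | symm _ _ _ ih => exact ih.symm
  | trans _ _ _ _ _ ihxy ihyz => exact ihxy.trans ihyz

theorem statement_9_general {Agt AP : Type}
    (Hs : TEHS Agt AP) (A : Coalition Agt) (φ : Formula Agt AP)
    (x y : Hs.G.Point) (hx : Formula.dk A φ ∈ Hs.H x)
    (m : ℕ) (pts : ℕ → Hs.G.Point) (h0 : pts 0 = x) (hm : pts m = y)
    (hstep : ∀ i < m, ∃ B : Coalition Agt, A.1 ⊆ B.1 ∧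
        (Hs.G.RD B (pts i) (pts (i + 1)) ∨ Hs.G.RD B (pts (i + 1)) (pts i))) :
    Formula.dk A φ ∈ Hs.H y ∧ φ ∈ Hs.H y := by
  have hxy : derivedRD Hs.G A x y := by
    subst h0 hm
    exact Relation.EqvGen.of_path fun i hi => by
      obtain ⟨B, hAB, hB | hB⟩ := hstep i hi
      exacts [.inl ⟨B, hAB, hB⟩, .inr ⟨B, hAB, hB⟩]
  have hy : Formula.dk A φ ∈ Hs.H y := (Hs.isH.dk_mem_iff_of_derivedRD_s9 hxy).1 hx
  exact ⟨hy, (Hs.isH.2.1 y).mem_of_dk_mem_s9 hy⟩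

/-- If `D_A φ ∈ H(r,n)` and `(r',n')` is connected to `(r,n)` by a finite
undirected path whose steps use relations `R^D_{B_i}` with `A ⊆ B_i`, then `D_A φ`
and `φ` belong to `H(r',n')`. -/
theorem statement_9 {Agt AP : Type} [Fintype Agt] [Nonempty Agt]
    (Hs : TEHS Agt AP) (A : Coalition Agt) (φ : Formula Agt AP)
    (x y : Hs.G.Point) (hx : Formula.dk A φ ∈ Hs.H x)
    (m : ℕ) (pts : ℕ → Hs.G.Point) (h0 : pts 0 = x) (hm : pts m = y)
    (hstep : ∀ i < m, ∃ B : Coalition Agt, A.1 ⊆ B.1 ∧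
        (Hs.G.RD B (pts i) (pts (i + 1)) ∨ Hs.G.RD B (pts (i + 1)) (pts i))) :
    Formula.dk A φ ∈ Hs.H y ∧ φ ∈ Hs.H y :=
  statement_9_general Hs A φ x y hx m pts h0 hm hstep

end CMATEL
end

section
/- For every formula θ of the language L: θ is satisfiable in a TEM if and only if there exists a TEHS in which θ is satisfiable. -/
/-!
The truth sets of a model form a Hintikka structure. Conversely, the labelling of a Hintikka
structure is true in the pseudo-model whose `R^D_A` is the equivalence generated by the relations
of all coalitions `B ⊇ A`: (H6) keeps every `D_{A'}` with `A' ⊆ A` constant along it. There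
`R^D_A` is only contained in `⋂_{a ∈ A} R^D_{{a}}`. Unravelling the pseudo-model into a forest
whose edges remember their coalition, and letting `R^D_A` be the intersection over `a ∈ A` of the
equivalences generated by the edges whose label contains `a`, gives a genuine model. It maps onto
the pseudo-model by a bounded morphism, because in a forest two nodes that are joined, for every
`a ∈ A`, by a path of edges whose labels contain `a` are joined by a path whose edge labels all
contain `A`.
-/

namespace CMATEL

variable {Agt AP : Type}

open Relation

lemma sat_untl_iff {R : Type} {RD RC : Coalition Agt → R × ℕ → R × ℕ → Prop}
    {lab : R × ℕ → Set AP} {x : R × ℕ} {φ ψ : Formula Agt AP} :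
    Sat RD RC lab x (.untl φ ψ) ↔
      Sat RD RC lab x ψ ∨ Sat RD RC lab x φ ∧ Sat RD RC lab (x.1, x.2 + 1) (.untl φ ψ) := by
  simp only [Sat]
  constructor
  · rintro ⟨i, hi, hψ, hφ⟩
    rcases hi.eq_or_lt with rfl | hlt
    · exact Or.inl hψ
    · exact Or.inr ⟨hφ _ le_rfl hlt, i, hlt, hψ, fun j hj hji => hφ j (by omega) hji⟩
  · rintro (hψ | ⟨hφ, i, hi, hψ, hφs⟩)
    · exact ⟨x.2, le_rfl, hψ, fun j hj hji => absurd hji (not_lt.2 hj)⟩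
    · refine ⟨i, by omega, hψ, fun j hj hji => ?_⟩
      rcases hj.eq_or_lt with rfl | hlt
      · exact hφ
      · exact hφs j hlt hji

namespace TEM

variable (M : TEM Agt AP)

lemma rd_of_subset {A A' : Coalition Agt} (h : A.1 ⊆ A'.1) {x y : M.G.Point}
    (hxy : M.G.RD A' x y) : M.G.RD A x y :=
  (M.isTEF.2 A x y).2 fun a ha => (M.isTEF.2 A' x y).1 hxy a (h ha)

lemma rc_of_rd_single {A : Coalition Agt} {a : Agt} (ha : a ∈ A.1) {x y : M.G.Point}
    (hxy : M.G.RD (single a) x y) : M.G.RC A x y := by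
  rw [M.G.hRC]
  exact ReflTransGen.single ⟨single a, Set.singleton_subset_iff.2 ha, hxy⟩

lemma fullyExpanded_sat (x : M.G.Point) : FullyExpanded {φ | M.sat x φ} := by
  have hE := M.isTEF.1
  refine ⟨fun φ h => not_not.mp h, fun φ ψ h => h, fun φ ψ h => ?_, fun φ h => h,
    fun φ ψ h => sat_untl_iff.mp h, fun φ ψ h => ?_, fun A A' φ h hsub y hy => ?_,
    fun A φ h => h x ((hE A).refl x), fun A φ h a ha y hy => ?_, fun A φ h => ?_,
    fun ψ _ A φ _ => em _⟩
  · exact not_and_or.mp h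
  · have := sat_untl_iff.not.mp h
    tauto
  · exact h y (M.rd_of_subset hsub hy)
  · have hxy : M.G.RC A x y := M.rc_of_rd_single ha hy
    refine ⟨h y hxy, fun z hz => h z ?_⟩
    rw [M.G.hRC] at hxy hz ⊢
    exact hxy.trans hz
  · obtain ⟨a, ha⟩ := A.2
    exact ⟨a, ha, fun hd => h (hd x ((hE (single a)).refl x)).2⟩

lemma isHintikka_sat : IsHintikka M.G fun x => {φ | M.sat x φ} := by
  have hE := M.isTEF.1
  refine ⟨fun x φ h hφ => h hφ, M.fullyExpanded_sat, fun r n φ h => h, fun r n φ ψ h => h,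
    fun x A φ h => ?_, fun x y A hxy A' hsub φ => ?_, fun x A φ h => ?_⟩
  · simpa [TEM.sat, Sat] using h
  · have hxy' : M.G.RD A' x y := M.rd_of_subset hsub hxy
    exact ⟨fun h z hz => h z ((hE A').trans hxy' hz),
      fun h z hz => h z ((hE A').trans ((hE A').symm hxy') hz)⟩
  · simpa [TEM.sat, Sat] using h

end TEM

namespace IsHintikka

variable {G : TES Agt} {H : G.Point → Set (Formula Agt AP)}

lemma neg_untl_mem (hH : IsHintikka G H) {φ ψ : Formula Agt AP} {r : ↥G.runs} :
    ∀ (d n : ℕ), Formula.neg (Formula.untl φ ψ) ∈ H (r, n) →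
      Formula.neg ψ ∈ H (r, n + d) ∨
        ∃ j, n ≤ j ∧ j < n + d ∧ Formula.neg φ ∈ H (r, j) := by
  intro d
  induction d with
  | zero =>
    intro n h
    obtain ⟨-, -, -, -, -, hnegU, -⟩ := hH.2.1 (r, n)
    rcases hnegU φ ψ h with ⟨hψ, -⟩ | ⟨hψ, -⟩ <;> exact Or.inl hψ
  | succ d ih =>
    intro n h
    obtain ⟨-, -, -, hnegX, -, hnegU, -⟩ := hH.2.1 (r, n)
    rcases hnegU φ ψ h with ⟨-, hφ⟩ | ⟨-, hX⟩
    · exact Or.inr ⟨n, le_rfl, by omega, hφ⟩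
    · have hnext := hH.2.2.1 r n _ (hnegX _ hX)
      rcases ih (n + 1) hnext with hψ | ⟨j, hj, hjd, hφ⟩
      · exact Or.inl (by rwa [Nat.add_right_comm, Nat.add_assoc] at hψ)
      · exact Or.inr ⟨j, by omega, by omega, hφ⟩

end IsHintikka

namespace TEHS

variable (Hs : TEHS Agt AP)

lemma dk_mem_iff_of_derivedRD {A A' : Coalition Agt} (hsub : A'.1 ⊆ A.1)
    {x y : Hs.G.Point} (h : derivedRD Hs.G A x y) (φ : Formula Agt AP) :
    Formula.dk A' φ ∈ Hs.H x ↔ Formula.dk A' φ ∈ Hs.H y := by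
  induction h with
  | rel u v huv =>
    obtain ⟨B, hB, hr⟩ := huv
    exact Hs.isH.2.2.2.2.2.1 u v B hr A' (hsub.trans hB) φ
  | refl u => exact Iff.rfl
  | symm u v _ ih => exact ih.symm
  | trans u v w _ _ ih1 ih2 => exact ih1.trans ih2

def pseudoTES : TES Agt :=
  { Hs.G with
    RD := derivedRD Hs.G
    RC := fun A => ReflTransGen fun x y =>
      ∃ A' : Coalition Agt, A'.1 ⊆ A.1 ∧ derivedRD Hs.G A' x y
    hRC := fun _ => rfl }

def pseudoModel : PseudoTEM Agt AP where
  G := Hs.pseudoTES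
  lab := derivedLab Hs
  isPTEF := ⟨fun _ => EqvGen.is_equivalence _, fun _ _ hsub _ _ h =>
    EqvGen.mono (fun _ _ ⟨C, hC, hr⟩ => ⟨C, hsub.trans hC, hr⟩) _ _ h⟩

lemma ck_mem_of_reflTransGen {A : Coalition Agt} {φ : Formula Agt AP} {x y : Hs.G.Point}
    (h : Formula.ck A φ ∈ Hs.H x)
    (hxy : ReflTransGen (fun u v => ∃ A' : Coalition Agt, A'.1 ⊆ A.1 ∧ derivedRD Hs.G A' u v)
      x y) : Formula.ck A φ ∈ Hs.H y := by
  induction hxy with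
  | refl => exact h
  | @tail b c _ hbc hb =>
    obtain ⟨A', hsub, hd⟩ := hbc
    obtain ⟨a, ha⟩ := A'.2
    obtain ⟨-, -, -, -, -, -, -, -, hckb, -⟩ := Hs.isH.2.1 b
    obtain ⟨-, handc, -, -, -, -, -, hdkc, -⟩ := Hs.isH.2.1 c
    have hDb := hckb A φ hb a (hsub ha)
    have hDc := (Hs.dk_mem_iff_of_derivedRD (Set.singleton_subset_iff.2 ha) hd _).1 hDb
    exact (handc _ _ (hdkc _ _ hDc)).2

lemma mem_of_ck_mem {A : Coalition Agt} {φ : Formula Agt AP} {x : Hs.G.Point}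
    (h : Formula.ck A φ ∈ Hs.H x) : φ ∈ Hs.H x := by
  obtain ⟨a, ha⟩ := A.2
  obtain ⟨-, hand, -, -, -, -, -, hdk, hck, -⟩ := Hs.isH.2.1 x
  exact (hand _ _ (hdk _ _ (hck A φ h a ha))).1

lemma pseudoModel_truth (φ : Formula Agt AP) (x : Hs.G.Point) :
    (φ ∈ Hs.H x → Hs.pseudoModel.sat x φ) ∧
      (Formula.neg φ ∈ Hs.H x → ¬ Hs.pseudoModel.sat x φ) := by
  obtain ⟨hcons, hfe, hnext, huntl, hdk, -, hck⟩ := Hs.isH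
  induction φ generalizing x with
  | atom p => exact ⟨id, fun h hs => hcons x _ h hs⟩
  | neg φ ih => exact ⟨(ih x).2, fun h hs => hs ((ih x).1 ((hfe x).1 φ h))⟩
  | and φ ψ ihφ ihψ =>
    refine ⟨fun h => ?_, fun h hs => ?_⟩
    · obtain ⟨h1, h2⟩ := (hfe x).2.1 φ ψ h
      exact ⟨(ihφ x).1 h1, (ihψ x).1 h2⟩
    · rcases (hfe x).2.2.1 φ ψ h with h1 | h1
      · exact (ihφ x).2 h1 hs.1
      · exact (ihψ x).2 h1 hs.2
  | next φ ih =>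
    refine ⟨fun h => (ih _).1 (hnext x.1 x.2 φ h), fun h hs => ?_⟩
    exact (ih _).2 (hnext x.1 x.2 _ ((hfe x).2.2.2.1 φ h)) hs
  | untl φ ψ ihφ ihψ =>
    refine ⟨fun h => ?_, fun h hs => ?_⟩
    · obtain ⟨i, hi, hψ, hφ⟩ := huntl x.1 x.2 φ ψ h
      exact ⟨i, hi, (ihψ _).1 hψ, fun j h1 h2 => (ihφ _).1 (hφ j h1 h2)⟩
    · obtain ⟨i, hi, hsψ, hsφ⟩ := hs
      obtain ⟨d, rfl⟩ := Nat.exists_eq_add_of_le hi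
      rcases Hs.isH.neg_untl_mem d x.2 h with hψ | ⟨j, hj, hji, hφ⟩
      · exact (ihψ _).2 hψ hsψ
      · exact (ihφ _).2 hφ (hsφ j hj hji)
  | dk A φ ih =>
    refine ⟨fun h y hy => ?_, fun h hs => ?_⟩
    · have hy' := (Hs.dk_mem_iff_of_derivedRD subset_rfl hy φ).1 h
      exact (ih y).1 ((hfe y).2.2.2.2.2.2.2.1 A φ hy')
    · obtain ⟨y, hr, hnφ⟩ := hdk x A φ h
      exact (ih y).2 hnφ (hs y (EqvGen.rel _ _ ⟨A, subset_rfl, hr⟩))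
  | ck A φ ih =>
    refine ⟨fun h y hy => (ih y).1 (Hs.mem_of_ck_mem (Hs.ck_mem_of_reflTransGen h hy)),
      fun h hs => ?_⟩
    obtain ⟨y, hxy, hnφ⟩ := hck x A φ h
    rw [Hs.G.hRC] at hxy
    refine (ih y).2 hnφ (hs y (ReflTransGen.mono (fun u v ⟨A', hA', hr⟩ => ?_) _ _ hxy))
    exact ⟨A', hA', EqvGen.rel _ _ ⟨A', subset_rfl, hr⟩⟩

end TEHS

structure TES.IsBoundedMorphism (G G' : TES Agt) (F : ↥G.runs → ↥G'.runs) : Prop where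
  forth : ∀ (A : Coalition Agt) (x y : G.Point), G.RD A x y →
    G'.RD A (Prod.map F id x) (Prod.map F id y)
  back : ∀ (A : Coalition Agt) (x : G.Point) (z : G'.Point), G'.RD A (Prod.map F id x) z →
    ∃ y, G.RD A x y ∧ Prod.map F id y = z

namespace TES.IsBoundedMorphism

variable {G G' : TES Agt} {F : ↥G.runs → ↥G'.runs}

lemma rc_forth (hF : G.IsBoundedMorphism G' F) {A : Coalition Agt} {x y : G.Point}
    (h : G.RC A x y) :
    G'.RC A (Prod.map F id x) (Prod.map F id y) := by
  rw [G.hRC] at h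
  rw [G'.hRC]
  exact ReflTransGen.lift (Prod.map F id)
    (fun _ _ ⟨A', hA', hr⟩ => ⟨A', hA', hF.forth A' _ _ hr⟩) _ _ h

lemma rc_back (hF : G.IsBoundedMorphism G' F) {A : Coalition Agt} {x : G.Point} {z : G'.Point}
    (h : G'.RC A (Prod.map F id x) z) : ∃ y, G.RC A x y ∧ Prod.map F id y = z := by
  rw [G'.hRC] at h
  simp only [G.hRC]
  induction h with
  | refl => exact ⟨x, ReflTransGen.refl, rfl⟩
  | tail _ hbc ih =>
    obtain ⟨y, hxy, rfl⟩ := ih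
    obtain ⟨A', hA', hr⟩ := hbc
    obtain ⟨y', hyy', rfl⟩ := hF.back A' y _ hr
    exact ⟨y', hxy.tail ⟨A', hA', hyy'⟩, rfl⟩

lemma sat_iff (hF : G.IsBoundedMorphism G' F) {lab : G.Point → Set AP} {lab' : G'.Point → Set AP}
    (hlab : ∀ x, lab x = lab' (Prod.map F id x)) (φ : Formula Agt AP) (x : G.Point) :
    Sat G.RD G.RC lab x φ ↔ Sat G'.RD G'.RC lab' (Prod.map F id x) φ := by
  induction φ generalizing x with
  | atom p => exact Set.ext_iff.1 (hlab x) p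
  | neg φ ih => exact not_congr (ih x)
  | and φ ψ ihφ ihψ => exact and_congr (ihφ x) (ihψ x)
  | next φ ih => exact ih _
  | untl φ ψ ihφ ihψ =>
    exact exists_congr fun i => and_congr Iff.rfl (and_congr (ihψ _)
      (forall_congr' fun j => imp_congr Iff.rfl (imp_congr Iff.rfl (ihφ _))))
  | dk A φ ih =>
    refine ⟨fun h z hz => ?_, fun h y hy => (ih y).2 (h _ (hF.forth A x y hy))⟩
    obtain ⟨y, hxy, rfl⟩ := hF.back A x z hz
    exact (ih y).1 (h y hxy)
  | ck A φ ih =>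
    refine ⟨fun h z hz => ?_, fun h y hy => (ih y).2 (h _ (hF.rc_forth hy))⟩
    obtain ⟨y, hxy, rfl⟩ := hF.rc_back hz
    exact (ih y).1 (h y hxy)

end TES.IsBoundedMorphism

section Forest

variable {α : Type*}

lemma eqvGen_iff_join_of_rightUnique {S : α → α → Prop} (hS : Relator.RightUnique (flip S))
    {x y : α} : EqvGen S x y ↔ Join (ReflTransGen (flip S)) x y := by
  have hJ : Equivalence (Join (ReflTransGen (flip S))) :=
    equivalence_join_reflTransGen fun _ b _ hab hac => ⟨b, ReflGen.refl, hS hab hac ▸ .refl⟩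
  refine ⟨fun h => hJ.eqvGen_iff.mp (EqvGen.mono (fun p u hpu => ?_) _ _ h), fun h => ?_⟩
  · exact ⟨p, .refl, .single hpu⟩
  · refine join_le_of_equivalence_of_le (EqvGen.is_equivalence S) (fun u v huv => ?_) _ _ h
    exact (EqvGen.is_equivalence S).symm
      (EqvGen.reflTransGen_le_eqvGen _ _ _ (reflTransGen_swap.mp huv))

lemma eq_or_lt_of_reflTransGen {r : α → α → Prop} {d : α → ℕ} (hd : ∀ u v, r u v → d v < d u)
    {x y : α} (h : ReflTransGen r x y) : y = x ∨ d y < d x := by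
  induction h with
  | refl => exact Or.inl rfl
  | tail _ hbc ih =>
    have := hd _ _ hbc
    rcases ih with rfl | hlt
    · exact Or.inr this
    · exact Or.inr (this.trans hlt)

variable {ι : Type*}

/-- `step i p x`: `x` is a child of `p` along an edge labelled `i`. -/
structure IsLabelledForest (step : ι → α → α → Prop) (depth : α → ℕ) : Prop where
  parent_unique : ∀ {i j p q x}, step i p x → step j q x → p = q
  depth_child : ∀ {i p x}, step i p x → depth x = depth p + 1

variable {step : ι → α → α → Prop} {depth : α → ℕ}

namespace IsLabelledForest

lemma exists_forall_step_of_forall_join (hF : IsLabelledForest step depth) {S : Set ι}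
    (hS : S.Nonempty) {x y : α} (hle : depth x ≤ depth y) (hne : x ≠ y)
    (h : ∀ i ∈ S, Join (ReflTransGen (flip (step i))) x y) :
    ∃ p, (∀ i ∈ S, step i p y) ∧ ∀ i ∈ S, Join (ReflTransGen (flip (step i))) x p := by
  have hparent : ∀ i ∈ S, ∃ p, step i p y ∧ Join (ReflTransGen (flip (step i))) x p := by
    intro i hi
    obtain ⟨z, hxz, hyz⟩ := h i hi
    rcases hyz.cases_head with rfl | ⟨p, hp, hpz⟩
    · rcases eq_or_lt_of_reflTransGen (d := depth)
        (fun u v huv => by have := hF.depth_child huv; omega) hxz with rfl | hlt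
      · exact absurd rfl hne
      · omega
    · exact ⟨p, hp, z, hxz, hpz⟩
  obtain ⟨i₀, hi₀⟩ := hS
  obtain ⟨p, hp, -⟩ := hparent i₀ hi₀
  have hsame : ∀ i ∈ S, ∃ q, step i q y ∧ Join (ReflTransGen (flip (step i))) x q ∧ q = p :=
    fun i hi => (hparent i hi).imp fun q ⟨hq, hj⟩ => ⟨hq, hj, hF.parent_unique hq hp⟩
  refine ⟨p, fun i hi => ?_, fun i hi => ?_⟩ <;>
    obtain ⟨q, hq, hj, rfl⟩ := hsame i hi
  exacts [hq, hj]

lemma join_forall_step_of_forall_join (hF : IsLabelledForest step depth) {S : Set ι}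
    (hS : S.Nonempty) {x y : α} (h : ∀ i ∈ S, Join (ReflTransGen (flip (step i))) x y) :
    Join (ReflTransGen (flip fun p u => ∀ i ∈ S, step i p u)) x y := by
  induction hN : depth x + depth y using Nat.strong_induction_on generalizing x y with
  | _ N ih =>
    wlog hle : depth x ≤ depth y generalizing x y
    · obtain ⟨z, hyz, hxz⟩ :=
        this (fun i hi => let ⟨c, h1, h2⟩ := h i hi; ⟨c, h2, h1⟩) (by omega) (by omega)
      exact ⟨z, hxz, hyz⟩
    by_cases hxy : x = y
    · exact hxy ▸ ⟨x, .refl, .refl⟩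
    obtain ⟨p, hpy, hxp⟩ := hF.exists_forall_step_of_forall_join hS hle hxy h
    obtain ⟨i₀, hi₀⟩ := hS
    obtain ⟨z, hxz, hpz⟩ := ih _ (by have := hF.depth_child (hpy i₀ hi₀); omega) hxp rfl
    exact ⟨z, hxz, .head hpy hpz⟩

lemma rel_of_forall_eqvGen (hF : IsLabelledForest step depth) {β : Type*} {R : β → β → Prop}
    (hR : Equivalence R) {f : α → β} {S : Set ι} (hS : S.Nonempty)
    (hf : ∀ p x, (∀ i ∈ S, step i p x) → R (f p) (f x))
    {x y : α} (h : ∀ i ∈ S, EqvGen (step i) x y) : R (f x) (f y) := by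
  have hjoin := hF.join_forall_step_of_forall_join hS fun i hi =>
    (eqvGen_iff_join_of_rightUnique (S := step i) fun _ _ _ hp hq => hF.parent_unique hp hq).mp
      (h i hi)
  have hR' : Equivalence fun u v => R (f u) (f v) :=
    ⟨fun _ => hR.refl _, hR.symm, hR.trans⟩
  refine join_le_of_equivalence_of_le hR' (fun u v huv => ?_) _ _ hjoin
  induction huv with
  | refl => exact hR.refl _
  | tail _ hbc ih => exact hR.trans ih (hR.symm (hf _ _ hbc))

end IsLabelledForest

end Forest

namespace Unravel

variable (G : TES Agt)

/-- A node: a root run and the edges taken from it, latest first; the edge `(B, t, z)` leaves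
the current run at time `t` along `R^D_B` and continues on the run of `z`. -/
abbrev Node : Type := ↥G.runs × List (Coalition Agt × ℕ × G.Point)

variable {G}

def run : Node G → ↥G.runs
  | (r, []) => r
  | (_, (_, _, z) :: _) => z.1

def base (x : Node G × ℕ) : G.Point := (run x.1, x.2)

def child (p : Node G × ℕ) (B : Coalition Agt) (z : G.Point) : Node G × ℕ :=
  ((p.1.1, (B, p.2, z) :: p.1.2), z.2)

def depth (x : Node G × ℕ) : ℕ := x.1.2.length

lemma eq_and_eq_of_child_eq {p q : Node G × ℕ} {B B' : Coalition Agt} {z z' : G.Point}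
    (h : child p B z = child q B' z') : p = q ∧ B = B' := by
  obtain ⟨⟨r, l⟩, t⟩ := p
  obtain ⟨⟨r', l'⟩, t'⟩ := q
  simp only [child, Prod.mk.injEq, List.cons.injEq] at h
  obtain ⟨⟨rfl, ⟨rfl, rfl, -⟩, rfl⟩, -⟩ := h
  exact ⟨rfl, rfl⟩

variable (G) in
def Step (a : Agt) (p x : Node G × ℕ) : Prop :=
  ∃ (B : Coalition Agt) (z : G.Point), a ∈ B.1 ∧ G.RD B (base p) z ∧ child p B z = x

lemma isLabelledForest_step : IsLabelledForest (Step G) depth where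
  parent_unique := by
    rintro _ _ _ _ _ ⟨B, z, -, -, rfl⟩ ⟨B', z', -, -, h⟩
    exact (eq_and_eq_of_child_eq h).1.symm
  depth_child := by
    rintro _ _ _ ⟨B, z, -, -, rfl⟩
    rfl

/-- All agents of `A` step from `p` to `x` along the same edge, so its label contains `A`. -/
lemma rd_base_of_forall_step (hmono : ∀ A B : Coalition Agt, B.1 ⊆ A.1 →
      ∀ x y : G.Point, G.RD A x y → G.RD B x y)
    {A : Coalition Agt} {p x : Node G × ℕ} (h : ∀ a ∈ A.1, Step G a p x) :
    G.RD A (base p) (base x) := by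
  obtain ⟨a₀, ha₀⟩ := A.2
  obtain ⟨B, z, -, hr, rfl⟩ := h a₀ ha₀
  refine hmono B A (fun a ha => ?_) _ _ hr
  obtain ⟨B', z', haB', -, h'⟩ := h a ha
  exact (eq_and_eq_of_child_eq h').2 ▸ haB'

end Unravel

open Unravel in
/-- Runs are constant, so a point is a node together with a time. -/
def TES.unravel (G : TES Agt) : TES Agt where
  State := Node G
  stateNE := ⟨(⟨G.runsNE.some, G.runsNE.some_mem⟩, [])⟩
  runs := Set.range (Function.const ℕ)
  runsNE := ⟨_, Set.mem_range_self (⟨G.runsNE.some, G.runsNE.some_mem⟩, [])⟩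
  RD A x y := ∀ a ∈ A.1, EqvGen (Step G a) (x.1.1 0, x.2) (y.1.1 0, y.2)
  RC A := ReflTransGen fun x y => ∃ A' : Coalition Agt, A'.1 ⊆ A.1 ∧
    ∀ a ∈ A'.1, EqvGen (Step G a) (x.1.1 0, x.2) (y.1.1 0, y.2)
  hRC _ := rfl

namespace TES

open Unravel

variable (G : TES Agt)

def unravelRun (h : Node G) : ↥G.unravel.runs := ⟨Function.const ℕ h, h, rfl⟩

def unravelProj (r : ↥G.unravel.runs) : ↥G.runs := run (r.1 0)

lemma isTEF_unravel : IsTEF G.unravel :=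
  ⟨fun _ => ⟨fun _ _ _ => EqvGen.refl _, fun h a ha => EqvGen.symm _ _ (h a ha),
      fun h₁ h₂ a ha => EqvGen.trans _ _ _ (h₁ a ha) (h₂ a ha)⟩,
    fun _ _ _ => ⟨fun h a ha _ hb => hb ▸ h a ha, fun h a ha => h a ha a rfl⟩⟩

variable {G}

lemma isBoundedMorphism_unravel (hG : IsPseudoTEF G) :
    G.unravel.IsBoundedMorphism G G.unravelProj where
  forth A _ _ h := isLabelledForest_step.rel_of_forall_eqvGen (hG.1 A) A.2
    (fun _ _ => rd_base_of_forall_step hG.2) h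
  back A x z hz := ⟨(G.unravelRun (child (x.1.1 0, x.2) A z).1, z.2),
    fun _ ha => EqvGen.rel _ _ ⟨A, z, ha, hz, rfl⟩, rfl⟩

end TES

def PseudoTEM.unravel (P : PseudoTEM Agt AP) : TEM Agt AP where
  G := P.G.unravel
  lab x := P.lab (Prod.map P.G.unravelProj id x)
  isTEF := P.G.isTEF_unravel

lemma PseudoTEM.unravel_sat_iff (P : PseudoTEM Agt AP) (x : P.G.unravel.Point)
    (φ : Formula Agt AP) : P.unravel.sat x φ ↔ P.sat (Prod.map P.G.unravelProj id x) φ :=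
  (TES.isBoundedMorphism_unravel P.isPTEF).sat_iff (fun _ => rfl) φ x

theorem statement_12_general {Agt AP : Type}
    (θ : Formula Agt AP) :
    (∃ (M : TEM Agt AP) (x : M.G.Point), M.sat x θ) ↔
    (∃ (Hs : TEHS Agt AP) (x : Hs.G.Point), θ ∈ Hs.H x) := by
  constructor
  · rintro ⟨M, x, hx⟩
    exact ⟨⟨M.G, _, M.isHintikka_sat⟩, x, hx⟩
  · rintro ⟨Hs, x, hx⟩
    let P := Hs.pseudoModel
    refine ⟨P.unravel, (P.G.unravelRun (x.1, []), x.2), ?_⟩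
    exact (P.unravel_sat_iff _ θ).mpr ((Hs.pseudoModel_truth θ x).1 hx)

/-- `θ` is satisfiable in a TEM iff there is a TEHS in which `θ` is
satisfiable. -/
theorem statement_12 {Agt AP : Type} [Fintype Agt] [Nonempty Agt]
    (θ : Formula Agt AP) :
    (∃ (M : TEM Agt AP) (x : M.G.Point), M.sat x θ) ↔
    (∃ (Hs : TEHS Agt AP) (x : Hs.G.Point), θ ∈ Hs.H x) :=
  statement_12_general θ

end CMATEL
end

section
/- Let M be a TEM, let (r,n) be a point of M, and let Δ be a set of formulas all of whose members are true at (r,n) in M, with ¬D_A φ ∈ Δ for some coalition A and formula φ. Then there exists a point (r',n') of M with ((r,n),(r',n')) ∈ R^D_A such that every formula in the set {¬φ} ∪ {D_{A'} ψ : D_{A'} ψ ∈ Δ and A' a coalition with A' ⊆ A} ∪ {¬D_{A'} ψ : ¬D_{A'} ψ ∈ Δ and A' a coalition with A' ⊆ A} is true at (r',n') in M. -/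
/-!
Take an `R^D_A`-successor `y` of `x` witnessing `¬φ`. Since `R^D_A` is the intersection of
the single-agent relations, it refines `R^D_{A'}` for every `A' ⊆ A`; so `x` and `y` lie in
the same `R^D_{A'}`-equivalence class, and `D_{A'}ψ` has the same truth value at both.
-/

namespace CMATEL

variable {Agt AP : Type}

theorem TEM.rd_of_subset_s13 (M : TEM Agt AP) {A B : Coalition Agt} (hBA : B.1 ⊆ A.1)
    {x y : M.G.Point} (h : M.G.RD A x y) : M.G.RD B x y :=
  (M.isTEF.2 B x y).2 fun a ha => (M.isTEF.2 A x y).1 h a (hBA ha)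

theorem TEM.sat_dk_iff_of_rd (M : TEM Agt AP) {A A' : Coalition Agt} (hA' : A'.1 ⊆ A.1)
    {x y : M.G.Point} (hxy : M.G.RD A x y) (ψ : Formula Agt AP) :
    M.sat x (.dk A' ψ) ↔ M.sat y (.dk A' ψ) := by
  have hxy' := M.rd_of_subset_s13 hA' hxy
  have equiv := M.isTEF.1 A'
  exact ⟨fun hx z hyz => hx z (equiv.trans hxy' hyz),
    fun hy z hxz => hy z (equiv.trans (equiv.symm hxy') hxz)⟩

theorem TEM.sat_neg_dk_iff (M : TEM Agt AP) (x : M.G.Point) (A : Coalition Agt)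
    (φ : Formula Agt AP) :
    M.sat x (.neg (.dk A φ)) ↔ ∃ y, M.G.RD A x y ∧ M.sat y (.neg φ) := by
  simp [TEM.sat, Sat]

theorem statement_13_general {Agt AP : Type}
    (M : TEM Agt AP) (x : M.G.Point) (Δ : Set (Formula Agt AP))
    (hΔ : ∀ φ ∈ Δ, M.sat x φ) (A : Coalition Agt) (φ : Formula Agt AP)
    (hneg : Formula.neg (Formula.dk A φ) ∈ Δ) :
    ∃ y : M.G.Point, M.G.RD A x y ∧
      ∀ χ ∈ ({Formula.neg φ} ∪
          {χ : Formula Agt AP | ∃ (A' : Coalition Agt) (ψ : Formula Agt AP),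
              A'.1 ⊆ A.1 ∧ χ = Formula.dk A' ψ ∧ Formula.dk A' ψ ∈ Δ} ∪
          {χ : Formula Agt AP | ∃ (A' : Coalition Agt) (ψ : Formula Agt AP),
              A'.1 ⊆ A.1 ∧ χ = Formula.neg (Formula.dk A' ψ) ∧
              Formula.neg (Formula.dk A' ψ) ∈ Δ} : Set (Formula Agt AP)),
        M.sat y χ := by
  obtain ⟨y, hxy, hyφ⟩ := (M.sat_neg_dk_iff x A φ).1 (hΔ _ hneg)
  refine ⟨y, hxy, ?_⟩
  rintro χ ((rfl | ⟨A', ψ, hA', rfl, hmem⟩) | ⟨A', ψ, hA', rfl, hmem⟩)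
  · exact hyφ
  · exact (M.sat_dk_iff_of_rd hA' hxy ψ).1 (hΔ _ hmem)
  · exact mt (M.sat_dk_iff_of_rd hA' hxy ψ).2 (hΔ _ hmem)

/-- If every member of `Δ` is true at `(r,n)` and `¬D_A φ ∈ Δ`, then
there is an `R^D_A`-successor at which `¬φ` and all `D_{A'}ψ, ¬D_{A'}ψ ∈ Δ` with
`A' ⊆ A` are true. -/
theorem statement_13 {Agt AP : Type} [Fintype Agt] [Nonempty Agt]
    (M : TEM Agt AP) (x : M.G.Point) (Δ : Set (Formula Agt AP))
    (hΔ : ∀ φ ∈ Δ, M.sat x φ) (A : Coalition Agt) (φ : Formula Agt AP)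
    (hneg : Formula.neg (Formula.dk A φ) ∈ Δ) :
    ∃ y : M.G.Point, M.G.RD A x y ∧
      ∀ χ ∈ ({Formula.neg φ} ∪
          {χ : Formula Agt AP | ∃ (A' : Coalition Agt) (ψ : Formula Agt AP),
              A'.1 ⊆ A.1 ∧ χ = Formula.dk A' ψ ∧ Formula.dk A' ψ ∈ Δ} ∪
          {χ : Formula Agt AP | ∃ (A' : Coalition Agt) (ψ : Formula Agt AP),
              A'.1 ⊆ A.1 ∧ χ = Formula.neg (Formula.dk A' ψ) ∧
              Formula.neg (Formula.dk A' ψ) ∈ Δ} : Set (Formula Agt AP)),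
        M.sat y χ :=
  statement_13_general M x Δ hΔ A φ hneg

end CMATEL
end
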